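/- Let X₁,...,X_L be i.i.d. standard normal. For any fixed integer vector a ∈ ℤ^L that is not (± a) standard unit vector, the probability that the compute-and-forward rate with coefficient vector a exceeds the rate with the best unit vector eᵢ is at most e^{−L·E(L)} with E(L) = (1 − 3/L)·log‖a‖; in particular this probability tends to 0 as L → ∞ when ‖a‖ ≥ 2. -/

import Mathlib

open Real Finset MeasureTheory ProbabilityTheory

/-- Compute-and-forward computation rate with integer coefficient vector. -/
noncomputable def cfRateZ {k : ℕ} (P : ℝ) (h : Fin k → ℝ) (a : Fin k → ℤ) : ℝ :=
  (1/2) * max (Real.log ((∑ i, ((a i : ℝ))^2 -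
    P * (∑ i, h i * (a i : ℝ))^2 / (1 + P * ∑ i, (h i)^2))⁻¹)) 0

open scoped ENNReal

lemma lintegral_pi_prod' {n : ℕ} (μ : Fin n → Measure ℝ) [∀ i, SigmaFinite (μ i)]
    (f : Fin n → ℝ → ℝ≥0∞) (hf : ∀ i, Measurable (f i)) :
    ∫⁻ x : Fin n → ℝ, ∏ i, f i (x i) ∂Measure.pi μ = ∏ i, ∫⁻ t, f i t ∂μ i := by
  induction n with
  | zero => simp
  | succ n ih =>
    have mp := (measurePreserving_piFinSuccAbove μ 0).symm
      (MeasurableEquiv.piFinSuccAbove (fun _ => ℝ) 0)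
    have hm : Measurable fun w : Fin n → ℝ => ∏ i : Fin n, f i.succ (w i) :=
      Finset.measurable_prod _ fun i _ => (hf i.succ).comp (measurable_pi_apply i)
    calc ∫⁻ x : Fin (n+1) → ℝ, ∏ i, f i (x i) ∂Measure.pi μ
        = ∫⁻ y : ℝ × (Fin n → ℝ), f 0 y.1 * ∏ i : Fin n, f i.succ (y.2 i)
            ∂((μ 0).prod (Measure.pi fun j => μ ((0 : Fin (n+1)).succAbove j))) := by
          rw [← mp.map_eq, lintegral_map_equiv]
          simp_rw [MeasurableEquiv.piFinSuccAbove_symm_apply, Fin.insertNthEquiv,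
            Fin.prod_univ_succ, Fin.insertNth_zero, Equiv.coe_fn_mk, Fin.cons_succ,
            Fin.zero_succAbove, cast_eq, Fin.cons_zero]
      _ = (∫⁻ t, f 0 t ∂μ 0) * ∏ i : Fin n, ∫⁻ t, f i.succ t ∂μ i.succ := by
          rw [lintegral_prod_mul (hf 0).aemeasurable hm.aemeasurable]
          congr 1
          have := ih (fun j => μ j.succ) (fun j => f j.succ) (fun j => hf j.succ)
          simpa [Fin.zero_succAbove] using this
      _ = ∏ i, ∫⁻ t, f i t ∂μ i := by rw [Fin.prod_univ_succ]

lemma pi_gaussian_eq_withDensity (L : ℕ) :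
    Measure.pi (fun _ : Fin L => gaussianReal 0 1) =
      (volume : Measure (Fin L → ℝ)).withDensity
        (fun x => ∏ j, ENNReal.ofReal (gaussianPDFReal 0 1 (x j))) := by
  have hpdfm : Measurable fun t : ℝ => ENNReal.ofReal (gaussianPDFReal 0 1 t) :=
    (stronglyMeasurable_gaussianPDFReal 0 1).measurable.ennreal_ofReal
  refine Measure.pi_eq fun s hs => ?_
  rw [withDensity_apply _ (MeasurableSet.univ_pi hs), ← lintegral_indicator (MeasurableSet.univ_pi hs)]
  have : (Set.indicator (Set.pi Set.univ s)
      (fun x : Fin L → ℝ => ∏ j, ENNReal.ofReal (gaussianPDFReal 0 1 (x j)))) =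
      fun x => ∏ j, Set.indicator (s j) (fun t => ENNReal.ofReal (gaussianPDFReal 0 1 t)) (x j) := by
    funext x
    by_cases hx : x ∈ Set.pi Set.univ s
    · rw [Set.indicator_of_mem hx]
      exact (Finset.prod_congr rfl fun j _ =>
        (Set.indicator_of_mem (hx j trivial)
          (fun t => ENNReal.ofReal (gaussianPDFReal 0 1 t))).symm)
    · rw [Set.indicator_of_notMem hx]
      rw [Set.mem_univ_pi] at hx
      push_neg at hx
      obtain ⟨j, hj⟩ := hx
      exact (Finset.prod_eq_zero (Finset.mem_univ j) (Set.indicator_of_notMem hj _)).symm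
  rw [this, volume_pi, lintegral_pi_prod' _ _ (fun j => hpdfm.indicator (hs j))]
  refine Finset.prod_congr rfl fun j _ => ?_
  rw [gaussianReal_apply 0 one_ne_zero (s j), lintegral_indicator (hs j)]
  simp [gaussianPDF_def]

lemma prod_gaussian_pdf_eq {L : ℕ} (x : Fin L → ℝ) :
    (∏ j, ENNReal.ofReal (gaussianPDFReal 0 1 (x j))) =
      ENNReal.ofReal ((Real.sqrt (2 * π))⁻¹ ^ L *
        Real.exp (-(∑ j, (x j)^2) / 2)) := by
  have h1 : ∀ t : ℝ, gaussianPDFReal 0 1 t = (Real.sqrt (2 * π))⁻¹ * Real.exp (-(t^2) / 2) := by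
    intro t
    rw [gaussianPDFReal_def]
    norm_num
  simp_rw [h1]
  rw [← ENNReal.ofReal_prod_of_nonneg (fun j _ => by positivity)]
  congr 1
  rw [Finset.prod_mul_distrib, Finset.prod_const, Finset.card_univ, Fintype.card_fin,
    ← Real.exp_sum]
  congr 1
  rw [← Finset.sum_div, ← Finset.sum_neg_distrib]

lemma map_gaussian_pi {L : ℕ} (T : (Fin L → ℝ) →ₗ[ℝ] (Fin L → ℝ))
    (hTT : ∀ x, T (T x) = x)
    (hTnorm : ∀ x, ∑ j, (T x j)^2 = ∑ j, (x j)^2) :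
    Measure.map T (Measure.pi fun _ : Fin L => gaussianReal 0 1) =
      Measure.pi fun _ : Fin L => gaussianReal 0 1 := by
  have hTm : Measurable T := T.continuous_of_finiteDimensional.measurable
  set D : (Fin L → ℝ) → ℝ≥0∞ :=
    fun x => ∏ j, ENNReal.ofReal (gaussianPDFReal 0 1 (x j)) with hDdef
  have hDm : Measurable D :=
    Finset.measurable_prod _ fun j _ =>
      ((stronglyMeasurable_gaussianPDFReal 0 1).measurable.ennreal_ofReal).comp
        (measurable_pi_apply j)
  have hDT : ∀ x, D (T x) = D x := by
    intro x
    rw [hDdef]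
    simp only
    rw [prod_gaussian_pdf_eq, prod_gaussian_pdf_eq, hTnorm]
  -- determinant
  have hcomp : T.comp T = LinearMap.id := LinearMap.ext hTT
  have hdet2 : LinearMap.det T * LinearMap.det T = 1 := by
    rw [← LinearMap.det_comp, hcomp, LinearMap.det_id]
  have habs : |(LinearMap.det T)⁻¹| = 1 := by
    rcases mul_self_eq_one_iff.mp hdet2 with h | h <;> rw [h] <;> norm_num
  have hdet0 : LinearMap.det T ≠ 0 := by
    intro h; rw [h, mul_zero] at hdet2; exact one_ne_zero hdet2.symm
  have hvol : Measure.map T (volume : Measure (Fin L → ℝ)) = volume := by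
    rw [Real.map_linearMap_volume_pi_eq_smul_volume_pi hdet0, habs]
    simp
  ext s hs
  rw [pi_gaussian_eq_withDensity, Measure.map_apply hTm hs,
    withDensity_apply _ (hTm hs), withDensity_apply _ hs,
    ← lintegral_indicator (hTm hs), ← lintegral_indicator hs]
  have hind : Set.indicator (T ⁻¹' s) D = fun x => Set.indicator s D (T x) := by
    funext x
    by_cases hx : T x ∈ s
    · rw [Set.indicator_of_mem hx, Set.indicator_of_mem (by exact hx), hDT]
    · rw [Set.indicator_of_notMem hx, Set.indicator_of_notMem (by exact hx)]
  rw [hind, ← lintegral_map (hDm.indicator hs) hTm, hvol]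

lemma gaussian_tail_right {r : ℝ} (hr : 0 ≤ r) :
    gaussianReal 0 1 (Set.Ici r) ≤ ENNReal.ofReal (Real.exp (-r^2/2)) := by
  rw [gaussianReal_apply_eq_integral 0 one_ne_zero]
  apply ENNReal.ofReal_le_ofReal
  set g : ℝ → ℝ := fun x => (Real.sqrt (2*π))⁻¹ * Real.exp (-((x - r)^2)/2) *
    Real.exp (-r^2/2) with hg
  have hgrw : g = fun x => ((Real.sqrt (2*π))⁻¹ * Real.exp (-r^2/2)) *
      Real.exp (-(1/2) * (x-r)^2) := by
    funext x; rw [hg]; ring_nf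
  have hgint : Integrable g := by
    rw [hgrw]
    exact ((integrable_exp_neg_mul_sq (by norm_num : (0:ℝ) < 1/2)).comp_sub_right
      r).const_mul _
  have hpdf : ∀ t : ℝ, gaussianPDFReal 0 1 t = (Real.sqrt (2 * π))⁻¹ *
      Real.exp (-(t^2) / 2) := by
    intro t; rw [gaussianPDFReal_def]; norm_num
  have hmono : ∀ x ∈ Set.Ici r, gaussianPDFReal 0 1 x ≤ g x := by
    intro x hx
    rw [hpdf, hg]
    simp only
    rw [mul_assoc, ← Real.exp_add]
    apply mul_le_mul_of_nonneg_left _ (by positivity)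
    apply Real.exp_le_exp.mpr
    nlinarith [Set.mem_Ici.mp hx]
  calc ∫ x in Set.Ici r, gaussianPDFReal 0 1 x
      ≤ ∫ x in Set.Ici r, g x := by
        apply setIntegral_mono_on
          ((integrable_gaussianPDFReal 0 1).integrableOn) hgint.integrableOn
          measurableSet_Ici hmono
    _ ≤ ∫ x, g x := setIntegral_le_integral hgint
        (Filter.Eventually.of_forall fun x => by rw [hg]; positivity)
    _ = Real.exp (-r^2/2) := by
        rw [hgrw]
        rw [integral_const_mul]
        rw [show (fun x : ℝ => Real.exp (-(1/2) * (x-r)^2)) = fun x =>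
          (fun y => Real.exp (-(1/2) * y^2)) (x - r) from rfl]
        rw [integral_sub_right_eq_self (fun y : ℝ => Real.exp (-(1/2) * y^2)) r]
        rw [integral_gaussian]
        rw [show π / (1/2) = 2 * π by ring]
        rw [mul_comm ((Real.sqrt (2*π))⁻¹) _, mul_assoc]
        rw [inv_mul_cancel₀ (by positivity : Real.sqrt (2*π) ≠ 0), mul_one]

lemma gaussian_sq_tail {c : ℝ} (hc : 0 ≤ c) :
    gaussianReal 0 1 {x : ℝ | c ≤ x^2} ≤ 2 * ENNReal.ofReal (Real.exp (-c/2)) := by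
  have hsub : {x : ℝ | c ≤ x^2} ⊆ Set.Ici (Real.sqrt c) ∪ Set.Iic (-Real.sqrt c) := by
    intro x hx
    have h1 : Real.sqrt c ≤ |x| := by
      rw [← Real.sqrt_sq_eq_abs]
      exact Real.sqrt_le_sqrt hx
    rcases abs_cases x with ⟨h2, _⟩ | ⟨h2, _⟩
    · exact Or.inl (Set.mem_Ici.mpr (h2 ▸ h1))
    · exact Or.inr (Set.mem_Iic.mpr (by linarith [h2 ▸ h1]))
  have hneg : gaussianReal 0 1 (Set.Iic (-Real.sqrt c)) =
      gaussianReal 0 1 (Set.Ici (Real.sqrt c)) := by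
    have hmap : (gaussianReal 0 1).map (fun x : ℝ => -1 * x) = gaussianReal 0 1 := by
      rw [gaussianReal_map_const_mul (-1)]
      norm_num
    conv_lhs => rw [← hmap]
    rw [Measure.map_apply (show Measurable fun x : ℝ => -1 * x from
      measurable_const.mul measurable_id) measurableSet_Iic]
    congr 1
    ext x
    simp only [Set.mem_preimage, Set.mem_Iic, Set.mem_Ici]
    constructor <;> intro h <;> linarith
  have htail := gaussian_tail_right (Real.sqrt_nonneg c)
  have hsq : Real.sqrt c ^ 2 = c := Real.sq_sqrt hc
  calc gaussianReal 0 1 {x : ℝ | c ≤ x^2}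
      ≤ gaussianReal 0 1 (Set.Ici (Real.sqrt c) ∪ Set.Iic (-Real.sqrt c)) :=
        measure_mono hsub
    _ ≤ gaussianReal 0 1 (Set.Ici (Real.sqrt c)) +
        gaussianReal 0 1 (Set.Iic (-Real.sqrt c)) := measure_union_le _ _
    _ = gaussianReal 0 1 (Set.Ici (Real.sqrt c)) +
        gaussianReal 0 1 (Set.Ici (Real.sqrt c)) := by rw [hneg]
    _ ≤ ENNReal.ofReal (Real.exp (-c/2)) + ENNReal.ofReal (Real.exp (-c/2)) := by
        rw [hsq] at htail; exact add_le_add htail htail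
    _ = 2 * ENNReal.ofReal (Real.exp (-c/2)) := (two_mul _).symm

lemma gaussian_exp_sq {t : ℝ} (ht : 0 ≤ t) :
    ∫⁻ x, ENNReal.ofReal (Real.exp (-t * x^2/2)) ∂(gaussianReal 0 1) =
      ENNReal.ofReal ((Real.sqrt (1+t))⁻¹) := by
  have h1t : (0:ℝ) < 1 + t := by linarith
  rw [gaussianReal_of_var_ne_zero 0 one_ne_zero,
    lintegral_withDensity_eq_lintegral_mul _ (measurable_gaussianPDF 0 1)
      (by measurability)]
  have heq : (fun a => (gaussianPDF 0 1 * fun x => ENNReal.ofReal (Real.exp (-t * x^2/2))) a) =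
      fun a : ℝ => ENNReal.ofReal ((Real.sqrt (2*π))⁻¹ * Real.exp (-((1+t)/2) * a^2)) := by
    funext a
    simp only [Pi.mul_apply, gaussianPDF_def]
    rw [← ENNReal.ofReal_mul (gaussianPDFReal_nonneg 0 1 a)]
    congr 1
    rw [gaussianPDFReal_def]
    norm_num
    rw [mul_assoc, ← Real.exp_add]
    congr 1
    ring
  rw [heq, ← ofReal_integral_eq_lintegral_ofReal]
  · rw [integral_const_mul, integral_gaussian]
    congr 1
    rw [show π / ((1+t)/2) = 2*π / (1+t) by field_simp]
    rw [Real.sqrt_div (by positivity : (0:ℝ) ≤ 2*π) (1+t)]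
    have h2 : Real.sqrt (2*π) ≠ 0 := by positivity
    have h3 : Real.sqrt (1+t) ≠ 0 := by positivity
    field_simp
  · exact ((integrable_exp_neg_mul_sq (by linarith : (0:ℝ) < (1+t)/2)).const_mul _)
  · exact Filter.Eventually.of_forall fun x => by positivity

noncomputable def dotLM {L : ℕ} (v : Fin L → ℝ) : (Fin L → ℝ) →ₗ[ℝ] ℝ where
  toFun x := ∑ j, x j * v j
  map_add' x y := by simp [add_mul, Finset.sum_add_distrib]
  map_smul' c x := by simp [Finset.mul_sum, mul_assoc]

noncomputable def hhLM {L : ℕ} (v : Fin L → ℝ) : (Fin L → ℝ) →ₗ[ℝ] (Fin L → ℝ) :=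
  LinearMap.id - (2 / (∑ j, v j * v j)) • (dotLM v).smulRight v

lemma hhLM_apply {L : ℕ} (v x : Fin L → ℝ) (j : Fin L) :
    hhLM v x j = x j - ((2 / (∑ k, v k * v k)) * ∑ k, x k * v k) * v j := by
  simp [hhLM, dotLM, mul_assoc]

lemma householder {n : ℕ} (u : Fin (n+1) → ℝ) (hu : ∑ j, u j ^ 2 = 1) :
    ∃ T : (Fin (n+1) → ℝ) →ₗ[ℝ] (Fin (n+1) → ℝ),
      (∀ x, T (T x) = x) ∧ (∀ x, ∑ j, (T x j)^2 = ∑ j, (x j)^2) ∧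
      (∀ x, T x 0 = ∑ j, x j * u j) := by
  classical
  set e0 : Fin (n+1) → ℝ := fun j => if j = 0 then 1 else 0 with he0
  by_cases hv : u = e0
  · refine ⟨LinearMap.id, fun x => rfl, fun x => rfl, fun x => ?_⟩
    subst hv
    simp [he0, mul_ite, Finset.sum_ite_eq']
  · set v : Fin (n+1) → ℝ := fun j => u j - e0 j with hvdef
    set q : ℝ := ∑ j, v j * v j with hq
    have hdotue : ∑ j, u j * e0 j = u 0 := by
      simp [he0, mul_ite, Finset.sum_ite_eq']
    have hqval : q = -2 * v 0 := by
      rw [hq]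
      have : ∀ j, v j * v j = u j ^ 2 - 2 * (u j * e0 j) + e0 j ^ 2 := by
        intro j; rw [hvdef]; simp only; ring
      rw [Finset.sum_congr rfl fun j _ => this j]
      rw [Finset.sum_add_distrib, Finset.sum_sub_distrib, ← Finset.mul_sum, hu, hdotue]
      have he2 : ∑ j, e0 j ^ 2 = 1 := by simp [he0, ite_pow, Finset.sum_ite_eq']
      rw [he2, hvdef]
      simp [he0]
      ring
    have hv0 : v 0 ≠ 0 := by
      intro h0
      apply hv
      have hq0 : q = 0 := by rw [hqval, h0]; ring
      have hvz : ∀ j, v j = 0 := by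
        intro j
        have hnn : ∀ k ∈ Finset.univ, (0:ℝ) ≤ v k * v k := fun k _ => mul_self_nonneg _
        have h2 := (Finset.sum_eq_zero_iff_of_nonneg hnn).mp (hq ▸ hq0) j (Finset.mem_univ j)
        exact mul_self_eq_zero.mp h2
      funext j
      have := hvz j
      rw [hvdef] at this
      simpa [sub_eq_zero] using this
    have hq0 : q ≠ 0 := by rw [hqval]; intro h; apply hv0; linarith [mul_eq_zero.mp h]
    -- expansion lemmas
    have hdotv : ∀ x : Fin (n+1) → ℝ, ∀ c : ℝ,
        ∑ j, (x j - c * v j) * v j = (∑ j, x j * v j) - c * q := by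
      intro x c
      have : ∀ j, (x j - c * v j) * v j = x j * v j - c * (v j * v j) := by
        intro j; ring
      rw [Finset.sum_congr rfl fun j _ => this j, Finset.sum_sub_distrib, ← Finset.mul_sum, hq]
    refine ⟨hhLM v, ?_, ?_, ?_⟩
    · intro x
      funext j
      set c : ℝ := (2 / q) * ∑ k, x k * v k with hc
      have h2 : ∀ k, hhLM v x k = x k - c * v k := fun k => hhLM_apply v x k
      rw [hhLM_apply, ← hq, Finset.sum_congr rfl fun k _ => by rw [h2 k], hdotv x c,
        h2 j, hc]
      field_simp
      ring
    · intro x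
      set c : ℝ := (2 / q) * ∑ k, x k * v k with hc
      have h2 : ∀ k, hhLM v x k = x k - c * v k := fun k => hhLM_apply v x k
      rw [Finset.sum_congr rfl fun k _ => by rw [h2 k]]
      have : ∀ k, (x k - c * v k)^2 = x k ^2 - (2*c) * (x k * v k) + c^2 * (v k * v k) := by
        intro k; ring
      rw [Finset.sum_congr rfl fun k _ => this k]
      rw [Finset.sum_add_distrib, Finset.sum_sub_distrib, ← Finset.mul_sum, ← Finset.mul_sum,
        ← hq, hc]
      field_simp
      ring
    · intro x
      rw [hhLM_apply, ← hq]
      have hdxv : ∑ k, x k * v k = (∑ k, x k * u k) - x 0 := by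
        have : ∀ k, x k * v k = x k * u k - x k * e0 k := by
          intro k; rw [hvdef]; simp only; ring
        rw [Finset.sum_congr rfl fun k _ => this k, Finset.sum_sub_distrib]
        simp [he0, mul_ite, Finset.sum_ite_eq']
      rw [hdxv]
      have h2q : (2 / q) * v 0 = -1 := by
        rw [hqval]
        field_simp
      have : 2 / q * ((∑ k, x k * u k) - x 0) * v 0 =
          (2 / q * v 0) * ((∑ k, x k * u k) - x 0) := by ring
      rw [this, h2q]
      ring

lemma sum_sq_eq_one_unit {L : ℕ} (a : Fin L → ℤ) (h1 : ∑ j, (a j)^2 = 1) :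
    ∃ (i : Fin L) (ε : ℤ), (ε = 1 ∨ ε = -1) ∧ a = fun j => if j = i then ε else 0 := by
  classical
  have hex : ∃ i, a i ≠ 0 := by
    by_contra hno
    push_neg at hno
    have : ∑ j, (a j)^2 = 0 := Finset.sum_eq_zero fun j _ => by rw [hno j]; ring
    omega
  obtain ⟨i, hi⟩ := hex
  have hi2 : 1 ≤ (a i)^2 := by
    rcases lt_or_eq_of_le (sq_nonneg (a i)) with h | h
    · omega
    · exact absurd (pow_eq_zero_iff (n := 2) (by norm_num) |>.mp h.symm) hi
  have hsplit : (a i)^2 + ∑ j ∈ Finset.univ.erase i, (a j)^2 = 1 := by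
    rw [← Finset.add_sum_erase _ _ (Finset.mem_univ i)] at h1
    exact h1
  have hnn2 : 0 ≤ ∑ j ∈ Finset.univ.erase i, (a j)^2 :=
    Finset.sum_nonneg fun j _ => sq_nonneg _
  have hrest : ∑ j ∈ Finset.univ.erase i, (a j)^2 = 0 := by omega
  have hz : ∀ j, j ≠ i → a j = 0 := by
    intro j hj
    have := (Finset.sum_eq_zero_iff_of_nonneg fun k _ => sq_nonneg (a k)).mp hrest j
      (Finset.mem_erase.mpr ⟨hj, Finset.mem_univ j⟩)
    exact pow_eq_zero_iff (n := 2) (by norm_num) |>.mp this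
  have hai : a i = 1 ∨ a i = -1 := by
    have : (a i)^2 = 1 := by omega
    have h2 : (a i - 1) * (a i + 1) = 0 := by ring_nf; omega
    rcases mul_eq_zero.mp h2 with h | h
    · left; omega
    · right; omega
  exact ⟨i, a i, hai, funext fun j => by
    by_cases hj : j = i
    · simp [hj]
    · simp [hj, hz j hj]⟩

lemma measure_cone_bound {n : ℕ} (c : Fin (n+1) → ℝ) {S : ℝ} (hS : 2 ≤ S)
    (hsum : ∑ j, c j ^ 2 = S) :
    (Measure.pi fun _ : Fin (n+1) => gaussianReal 0 1)
      {h : Fin (n+1) → ℝ | (S - 1) * ∑ j, (h j)^2 ≤ (∑ j, h j * c j)^2} ≤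
      2 * (ENNReal.ofReal ((Real.sqrt S)⁻¹))^n := by
  have hS0 : (0:ℝ) < S := by linarith
  have hsqS : Real.sqrt S ≠ 0 := by positivity
  set u : Fin (n+1) → ℝ := fun j => c j / Real.sqrt S with hu
  have husq : ∑ j, u j ^ 2 = 1 := by
    rw [hu]
    simp only [div_pow]
    rw [← Finset.sum_div, hsum, Real.sq_sqrt hS0.le, div_self hS0.ne']
  obtain ⟨T, hTT, hTnorm, hT0⟩ := householder u husq
  set μ := Measure.pi fun _ : Fin (n+1) => gaussianReal 0 1 with hμ
  set E0 : Set (Fin (n+1) → ℝ) :=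
    {h | (S - 1) * ((∑ j, (h j)^2) - (h 0)^2) ≤ (h 0)^2} with hE0
  have hmsum : Measurable fun h : Fin (n+1) → ℝ => ∑ j, (h j)^2 :=
    Finset.measurable_sum _ fun j _ => (measurable_pi_apply j).pow_const 2
  have hE0m : MeasurableSet E0 := measurableSet_le
    ((hmsum.sub ((measurable_pi_apply 0).pow_const 2)).const_mul _)
    ((measurable_pi_apply 0).pow_const 2)
  have hTm : Measurable T := T.continuous_of_finiteDimensional.measurable
  have hEeq : {h : Fin (n+1) → ℝ | (S - 1) * ∑ j, (h j)^2 ≤ (∑ j, h j * c j)^2}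
      = ⇑T ⁻¹' E0 := by
    ext h
    simp only [Set.mem_setOf_eq, Set.mem_preimage, hE0]
    have hd : ∑ j, h j * c j = Real.sqrt S * ∑ j, h j * u j := by
      rw [hu, Finset.mul_sum]
      refine Finset.sum_congr rfl fun j _ => ?_
      simp only
      field_simp
    rw [hT0 h, hTnorm h, hd]
    have h2 : (Real.sqrt S * ∑ j, h j * u j)^2 = S * (∑ j, h j * u j)^2 := by
      rw [mul_pow, Real.sq_sqrt hS0.le]
    rw [h2]
    constructor <;> intro hyp <;> nlinarith [sq_nonneg (∑ j, h j * u j)]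
  have hmapeq : μ (⇑T ⁻¹' E0) = μ E0 := by
    rw [← Measure.map_apply hTm hE0m, hμ, map_gaussian_pi T hTT hTnorm]
  rw [hEeq, hmapeq]
  -- Fubini
  have mp := ((measurePreserving_piFinSuccAbove
    (fun _ : Fin (n+1) => gaussianReal 0 1) 0).symm
    (MeasurableEquiv.piFinSuccAbove (fun _ => ℝ) 0))
  have hpre : ⇑(MeasurableEquiv.piFinSuccAbove (fun _ : Fin (n+1) => ℝ) 0).symm ⁻¹' E0 =
      {p : ℝ × (Fin n → ℝ) | (S - 1) * ∑ j, (p.2 j)^2 ≤ p.1^2} := by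
    ext p
    simp only [Set.mem_preimage, hE0, Set.mem_setOf_eq,
      MeasurableEquiv.piFinSuccAbove_symm_apply, Fin.insertNthEquiv, Equiv.coe_fn_mk,
      Fin.insertNth_zero, cast_eq, Fin.sum_univ_succ, Fin.cons_zero, Fin.cons_succ,
      add_sub_cancel_left]
  have hprem : MeasurableSet {p : ℝ × (Fin n → ℝ) | (S - 1) * ∑ j, (p.2 j)^2 ≤ p.1^2} := by
    refine measurableSet_le ?_ (measurable_fst.pow_const 2)
    exact (Finset.measurable_sum _ fun j _ =>
      ((measurable_pi_apply j).comp measurable_snd).pow_const 2).const_mul _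
  have hfub : μ E0 = ∫⁻ w : Fin n → ℝ, gaussianReal 0 1
      {x : ℝ | (S - 1) * ∑ j, (w j)^2 ≤ x^2}
      ∂(Measure.pi fun _ : Fin n => gaussianReal 0 1) := by
    have h1 := mp.measure_preimage (s := E0) hE0m.nullMeasurableSet
    rw [hpre] at h1
    rw [← h1]
    have hsucc : (fun _ : Fin n => gaussianReal 0 1) =
        (fun j : Fin n => (fun _ : Fin (n+1) => gaussianReal 0 1) ((0 : Fin (n+1)).succAbove j)) := rfl
    rw [Measure.prod_apply_symm hprem]
    rfl
  rw [hfub]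
  have hstep : ∀ w : Fin n → ℝ, gaussianReal 0 1
      {x : ℝ | (S - 1) * ∑ j, (w j)^2 ≤ x^2} ≤
      2 * ∏ j, ENNReal.ofReal (Real.exp (-(S-1) * (w j)^2/2)) := by
    intro w
    have hc0 : 0 ≤ (S - 1) * ∑ j, (w j)^2 := by
      apply mul_nonneg (by linarith)
      exact Finset.sum_nonneg fun j _ => sq_nonneg _
    refine le_trans (gaussian_sq_tail hc0) ?_
    apply mul_le_mul_right
    rw [← ENNReal.ofReal_prod_of_nonneg (fun j _ => (Real.exp_pos _).le), ← Real.exp_sum]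
    apply ENNReal.ofReal_le_ofReal
    apply Real.exp_le_exp.mpr
    have : ∀ j, -(S-1) * (w j)^2/2 = (-(S-1)/2) * (w j)^2 := fun j => by ring
    rw [Finset.sum_congr rfl fun j _ => this j, ← Finset.mul_sum]
    apply le_of_eq
    ring
  have hfm : Measurable fun t : ℝ => ENNReal.ofReal (Real.exp (-(S-1) * t^2/2)) :=
    (Real.continuous_exp.comp
      (((continuous_const.mul (continuous_pow 2))).div_const 2)).measurable.ennreal_ofReal
  calc ∫⁻ w : Fin n → ℝ, gaussianReal 0 1 {x : ℝ | (S - 1) * ∑ j, (w j)^2 ≤ x^2}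
        ∂(Measure.pi fun _ : Fin n => gaussianReal 0 1)
      ≤ ∫⁻ w : Fin n → ℝ, 2 * ∏ j, ENNReal.ofReal (Real.exp (-(S-1) * (w j)^2/2))
        ∂(Measure.pi fun _ : Fin n => gaussianReal 0 1) := lintegral_mono hstep
    _ = 2 * ∫⁻ w : Fin n → ℝ, ∏ j, ENNReal.ofReal (Real.exp (-(S-1) * (w j)^2/2))
        ∂(Measure.pi fun _ : Fin n => gaussianReal 0 1) := by
        rw [lintegral_const_mul]
        exact Finset.measurable_prod _ fun j _ => hfm.comp (measurable_pi_apply j)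
    _ = 2 * (ENNReal.ofReal ((Real.sqrt S)⁻¹))^n := by
        rw [lintegral_pi_prod' _ _ (fun j => hfm)]
        have hone : (1:ℝ) + (S - 1) = S := by ring
        have := gaussian_exp_sq (t := S - 1) (by linarith)
        rw [hone] at this
        rw [Finset.prod_congr rfl fun j _ => this, Finset.prod_const, Finset.card_univ,
          Fintype.card_fin]

lemma measure_coord_zero {L : ℕ} (i : Fin L) :
    (Measure.pi fun _ : Fin L => gaussianReal 0 1) {h : Fin L → ℝ | h i = 0} = 0 := by
  classical
  have hset : {h : Fin L → ℝ | h i = 0} =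
      Set.pi Set.univ (fun j => if j = i then ({0} : Set ℝ) else Set.univ) := by
    ext h
    simp only [Set.mem_setOf_eq, Set.mem_pi, Set.mem_univ, forall_true_left]
    constructor
    · intro h0 j
      by_cases hj : j = i
      · subst hj; simp [h0]
      · simp [hj]
    · intro hall
      have := hall i
      simpa using this
  rw [hset, Measure.pi_pi]
  apply Finset.prod_eq_zero (Finset.mem_univ i)
  simp only [if_pos rfl]
  exact (gaussianReal_absolutelyContinuous 0 one_ne_zero) (measure_singleton 0)

lemma final_arith {n : ℕ} {S : ℝ} (hS : 2 ≤ S) :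
    2 * (ENNReal.ofReal ((Real.sqrt S)⁻¹))^n ≤
      ENNReal.ofReal (Real.exp (-((((n:ℝ)+1) * (1 - 3 / ((n:ℝ)+1))) *
        Real.log (Real.sqrt S)))) := by
  set s := Real.sqrt S with hs
  have hs1 : 1 < s := by
    have h2 : Real.sqrt 1 < Real.sqrt S := Real.sqrt_lt_sqrt (by norm_num) (by linarith)
    rwa [Real.sqrt_one] at h2
  have hs0 : 0 < s := by linarith
  have hexp : ((n:ℝ)+1) * (1 - 3 / ((n:ℝ)+1)) = (n:ℝ) - 2 := by
    have hne : ((n:ℝ)+1) ≠ 0 := by positivity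
    field_simp
    ring
  rw [hexp]
  rw [show (2 : ℝ≥0∞) = ENNReal.ofReal (2:ℝ) by simp]
  rw [← ENNReal.ofReal_pow (by positivity : (0:ℝ) ≤ s⁻¹),
    ← ENNReal.ofReal_mul (by norm_num : (0:ℝ) ≤ 2)]
  apply ENNReal.ofReal_le_ofReal
  have hrpow : Real.exp (-(((n:ℝ) - 2) * Real.log s)) = s ^ ((2:ℝ) - (n:ℝ)) := by
    rw [Real.rpow_def_of_pos hs0]
    congr 1
    ring
  rw [hrpow]
  have h1 : s ^ ((2:ℝ) - (n:ℝ)) = s^2 * (s^n)⁻¹ := by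
    rw [show (2:ℝ) - (n:ℝ) = 2 + (-(n:ℝ)) by ring, Real.rpow_add hs0,
      Real.rpow_neg hs0.le, Real.rpow_natCast, Real.rpow_two]
  rw [h1, inv_pow, Real.sq_sqrt (by linarith : (0:ℝ) ≤ S)]
  have hinv : (0:ℝ) ≤ (s^n)⁻¹ := by positivity
  exact mul_le_mul_of_nonneg_right hS hinv

/-- for `h` with i.i.d. standard normal entries and any fixed
integer vector `a` that is not (±) a standard unit vector, the probability that
the rate with `a` beats the rate with a unit vector `eᵢ` is at most
`exp(−L·E(L))` with `E(L) = (1 − 3/L)·log‖a‖`. -/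
theorem stmt14 (L : ℕ) (hL : 1 ≤ L) (P : ℝ) (hP : 0 < P) (a : Fin L → ℤ)
    (ha : ¬ ∃ (i : Fin L) (ε : ℤ), (ε = 1 ∨ ε = -1) ∧
      a = fun j => if j = i then ε else 0)
    (i : Fin L) :
    (Measure.pi fun _ : Fin L => gaussianReal 0 1)
      {h : Fin L → ℝ |
        cfRateZ P h (fun j => if j = i then 1 else 0) ≤ cfRateZ P h a} ≤
    ENNReal.ofReal (Real.exp (-(L * (1 - 3 / (L : ℝ)) *
      Real.log (Real.sqrt (∑ j, ((a j : ℝ))^2))))) := by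
  classical
  have hScast : ∑ j, ((a j : ℝ))^2 = ((∑ j, (a j)^2 : ℤ) : ℝ) := by push_cast; ring
  by_cases hSz : (∑ j, (a j)^2 : ℤ) = 0
  · -- a = 0 : the bound is 1
    rw [hScast, hSz]
    simp only [Int.cast_zero, Real.sqrt_zero, Real.log_zero, mul_zero, neg_zero,
      Real.exp_zero, ENNReal.ofReal_one]
    exact prob_le_one
  -- now ∑ (a j)^2 ≥ 2
  have hSnn : (0:ℤ) ≤ ∑ j, (a j)^2 := Finset.sum_nonneg fun j _ => sq_nonneg _
  have hS1 : (∑ j, (a j)^2 : ℤ) ≠ 1 := fun h1 => ha (sum_sq_eq_one_unit a h1)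
  have hS2 : (2:ℤ) ≤ ∑ j, (a j)^2 := by omega
  have hSr : (2:ℝ) ≤ ∑ j, ((a j : ℝ))^2 := by rw [hScast]; exact_mod_cast hS2
  obtain ⟨n, rfl⟩ : ∃ n, L = n + 1 := ⟨L - 1, by omega⟩
  set S : ℝ := ∑ j, ((a j : ℝ))^2 with hSdef
  set N : Set (Fin (n+1) → ℝ) := {h | h i = 0} with hN
  set E : Set (Fin (n+1) → ℝ) :=
    {h | (S - 1) * ∑ j, (h j)^2 ≤ (∑ j, h j * (a j : ℝ))^2} with hE
  -- event inclusion
  have hsub : {h : Fin (n+1) → ℝ |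
      cfRateZ P h (fun j => if j = i then 1 else 0) ≤ cfRateZ P h a} ⊆ E ∪ N := by
    intro h hh
    by_cases hNi : h i = 0
    · exact Or.inr hNi
    left
    simp only [Set.mem_setOf_eq, cfRateZ] at hh
    have hcast1 : ∀ j : Fin (n+1),
        (((fun j => if j = i then (1:ℤ) else 0) j : ℤ) : ℝ) = if j = i then (1:ℝ) else 0 := by
      intro j; by_cases hj : j = i <;> simp [hj]
    rw [Finset.sum_congr rfl fun j _ => by rw [hcast1 j],
      Finset.sum_congr rfl (fun j _ => by rw [hcast1 j] : ∀ j ∈ Finset.univ,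
        h j * (((fun j => if j = i then (1:ℤ) else 0) j : ℤ) : ℝ) = h j * (if j = i then (1:ℝ) else 0))] at hh
    rw [show ∑ j : Fin (n+1), (if j = i then (1:ℝ) else 0)^2 = 1 by
        simp [ite_pow, Finset.sum_ite_eq'],
      show ∑ j : Fin (n+1), h j * (if j = i then (1:ℝ) else 0) = h i by
        simp [mul_ite, Finset.sum_ite_eq']] at hh
    set Hn : ℝ := ∑ j, (h j)^2 with hHn
    set g : ℝ := ∑ j, h j * (a j : ℝ) with hg
    have hile : (h i)^2 ≤ Hn :=
      Finset.single_le_sum (fun j _ => sq_nonneg (h j)) (Finset.mem_univ i)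
    have hipos : (0:ℝ) < (h i)^2 := by positivity
    have hHpos : 0 < Hn := lt_of_lt_of_le hipos hile
    have hd : 0 < 1 + P * Hn := by nlinarith
    set fe : ℝ := 1 - P * (h i)^2 / (1 + P * Hn) with hfe
    set fa : ℝ := S - P * g^2 / (1 + P * Hn) with hfa
    have hfe_pos : 0 < fe := by
      rw [hfe, sub_pos, div_lt_one hd]
      nlinarith [mul_le_mul_of_nonneg_left hile hP.le]
    have hfe_lt1 : fe < 1 := by
      rw [hfe]
      have : 0 < P * (h i)^2 / (1 + P * Hn) := by positivity
      linarith
    have hloge : 0 < Real.log (fe⁻¹) := by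
      rw [Real.log_inv]
      linarith [Real.log_neg hfe_pos hfe_lt1]
    have hmax : 0 < max (Real.log (fa⁻¹)) 0 := by
      have h1 : max (Real.log (fe⁻¹)) 0 ≤ max (Real.log (fa⁻¹)) 0 := by linarith
      have h2 : Real.log (fe⁻¹) ≤ max (Real.log (fe⁻¹)) 0 := le_max_left _ _
      linarith
    have hloga : 0 < Real.log (fa⁻¹) := by
      rcases le_or_gt (Real.log (fa⁻¹)) 0 with hc | hc
      · rw [max_eq_right hc] at hmax; exact absurd hmax (lt_irrefl 0)
      · exact hc
    have hfa1 : fa ≤ 1 := by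
      by_contra hgt
      push_neg at hgt
      have h0 : 0 < fa⁻¹ := inv_pos.mpr (by linarith)
      have h1 : fa⁻¹ < 1 := inv_lt_one_of_one_lt₀ hgt
      linarith [Real.log_neg h0 h1]
    have hkey : (S - 1) * (1 + P * Hn) ≤ P * g^2 := by
      rw [← le_div_iff₀ hd]
      rw [hfa] at hfa1
      linarith
    simp only [hE, Set.mem_setOf_eq, ← hHn, ← hg]
    nlinarith [hkey, mul_pos hP hHpos, hSr, sq_nonneg g]
  have hcone := measure_cone_bound (fun j => ((a j : ℝ))) hSr rfl
  set μ := Measure.pi fun _ : Fin (n+1) => gaussianReal 0 1 with hμ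
  set Ev := {h : Fin (n+1) → ℝ |
    cfRateZ P h (fun j => if j = i then 1 else 0) ≤ cfRateZ P h a} with hEv
  calc μ Ev ≤ μ (E ∪ N) := measure_mono hsub
    _ ≤ μ E + μ N := measure_union_le _ _
    _ = μ E := by rw [hN, hμ, measure_coord_zero i, add_zero]
    _ ≤ 2 * (ENNReal.ofReal ((Real.sqrt S)⁻¹))^n := hcone
    _ ≤ ENNReal.ofReal (Real.exp (-(((n+1 : ℕ) : ℝ) * (1 - 3 / (((n+1):ℕ) : ℝ)) *
        Real.log (Real.sqrt S)))) := by
        have hfin := final_arith (n := n) hSr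
        have hc : (((n+1):ℕ) : ℝ) = (n:ℝ) + 1 := by push_cast; ring
        rw [hc]
        exact hfin
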